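/- Equivalence of the continuous and discrete ODE preconditions for open B and open Q: let p_{x₀} be the unique solution of ẋ = e from x₀, f_{x₀,h} its piecewise-linear Euler approximation with step h, B an open predicate on states and Q an open predicate on (state, trace) pairs, tr a fixed trace, and ∅ the empty ready set. Then the condition (CP): 'for all d > 0, if B(p_{x₀}(t)) for all t ∈ [0,d) and ¬B(p_{x₀}(d)), then Q(p_{x₀}(d), tr⌢⟨d, p_{x₀}, ∅⟩)' is equivalent to the discrete condition (DP): 'for all T > 0, if for all 0 ≤ t < T there is ε₀ > 0 such that for all 0 < ε < ε₀ there is h₀ > 0 such that for all 0 < h < h₀, f_{x₀,h}(t) ∈ U_{−ε}(B), then there exists ε₀ > 0 such that for all 0 < ε < ε₀ there is h₀ > 0 such that for all 0 < h < h₀: if f_{x₀,h}(T) ∉ U_{−ε}(B) then (f_{x₀,h}(T), tr⌢⟨T, f_{x₀,h}, ∅⟩) ∈ U_{−ε}(Q)'. -/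

import Mathlib

open Set

set_option autoImplicit true

inductive RdyEv : Type
  | rin  (ch : String)
  | rout (ch : String)

inductive Dir : Type
  | inp | outp | io

/-- Generalized events over a state type `σ`. -/
inductive Ev (σ : Type) : Type
  | comm (ch : String) (dir : Dir) (v : ℝ)
  | wait (d : ℝ) (p : ℝ → σ) (rdy : Set RdyEv)

/-- Two states are within distance `ε` if all coordinates differ by less
than `ε`. -/
def stClose {n : ℕ} (ε : ℝ) (s s' : EuclideanSpace ℝ (Fin n)) : Prop :=
  ∀ i, |s i - s' i| < ε

/-- Two generalized events are within distance `ε`. -/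
def evClose {n : ℕ} (ε : ℝ) : Ev (EuclideanSpace ℝ (Fin n)) →
    Ev (EuclideanSpace ℝ (Fin n)) → Prop
  | .wait d1 p1 rdy1, .wait d2 p2 rdy2 =>
      |d1 - d2| < ε ∧ (∀ t, 0 < t → t < min d1 d2 → ‖p1 t - p2 t‖ < ε) ∧
        rdy1 = rdy2
  | .comm ch1 dir1 v1, .comm ch2 dir2 v2 =>
      ch1 = ch2 ∧ dir1 = dir2 ∧ |v1 - v2| < ε
  | _, _ => False

/-- Two traces are within distance `ε` if they have the same length and
corresponding events are within `ε`. -/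
def trClose {n : ℕ} (ε : ℝ) (tr tr' : List (Ev (EuclideanSpace ℝ (Fin n)))) : Prop :=
  List.Forall₂ (evClose ε) tr tr'

/-- Membership of a state in `U_{−ε}(B)`. -/
def inUminusB {n : ℕ} (ε : ℝ) (B : EuclideanSpace ℝ (Fin n) → Prop)
    (s : EuclideanSpace ℝ (Fin n)) : Prop :=
  ∀ s', stClose ε s s' → B s'

/-- Membership of a (state, trace) pair in `U_{−ε}(Q)`. -/
def inUminusQ {n : ℕ} (ε : ℝ)
    (Q : EuclideanSpace ℝ (Fin n) → List (Ev (EuclideanSpace ℝ (Fin n))) → Prop)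
    (s : EuclideanSpace ℝ (Fin n)) (tr : List (Ev (EuclideanSpace ℝ (Fin n)))) : Prop :=
  ∀ s' tr', stClose ε s s' → trClose ε tr tr' → Q s' tr'

/-- Euler iterates. -/
noncomputable def euler {n : ℕ} (e : EuclideanSpace ℝ (Fin n) → EuclideanSpace ℝ (Fin n))
    (x0 : EuclideanSpace ℝ (Fin n)) (h : ℝ) : ℕ → EuclideanSpace ℝ (Fin n)
  | 0 => x0
  | k + 1 => euler e x0 h k + h • e (euler e x0 h k)

/-- The piecewise-linear Euler interpolant `f_{x₀,h}`. -/
noncomputable def eulerInterp {n : ℕ}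
    (e : EuclideanSpace ℝ (Fin n) → EuclideanSpace ℝ (Fin n))
    (x0 : EuclideanSpace ℝ (Fin n)) (h : ℝ) (t : ℝ) : EuclideanSpace ℝ (Fin n) :=
  let i : ℕ := ⌊t / h⌋₊
  euler e x0 h i + ((t - (i : ℝ) * h) / h) • (euler e x0 h (i + 1) - euler e x0 h i)

/-!
(DP) involves the solution `p` only through the Euler interpolants, and the equivalence holds for
any family of curves converging to `p` uniformly on compact time intervals. The Euler
interpolants converge with error `O(h)`: on a compact neighbourhood of `p([0, T])` the field `e`
is Lipschitz and bounded, so Grönwall's inequality applies as long as the interpolant stays there,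
and an induction over the Euler steps shows that it does. Given uniform convergence, a state lies
in the open set `B` iff its approximations lie in `U_{−ε}(B)` for all small `ε` and `h`; this
turns the hypotheses of (CP) and (DP) into each other, and the conclusions correspond by the
openness of `Q`.
-/

open Filter Metric Topology NNReal

section EulerInterp

variable {n : ℕ} {e : EuclideanSpace ℝ (Fin n) → EuclideanSpace ℝ (Fin n)}
  {x0 : EuclideanSpace ℝ (Fin n)} {h t : ℝ}

lemma mem_Ico_natFloor_div_mul (hh : 0 < h) (ht : 0 ≤ t) :
    t ∈ Ico (⌊t / h⌋₊ * h) ((⌊t / h⌋₊ + 1) * h) :=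
  ⟨(le_div_iff₀ hh).1 (Nat.floor_le (div_nonneg ht hh.le)),
    (div_lt_iff₀ hh).1 (Nat.lt_floor_add_one _)⟩

lemma eulerInterp_eq_of_mem_Icc (hh : 0 < h) {k : ℕ} (ht : t ∈ Icc (k * h) ((k + 1) * h)) :
    eulerInterp e x0 h t = euler e x0 h k + (t - k * h) • e (euler e x0 h k) := by
  have hsucc : euler e x0 h (k + 1) - euler e x0 h k = h • e (euler e x0 h k) :=
    add_sub_cancel_left _ _
  rcases ht.2.lt_or_eq with hlt | rfl
  · have hk : ⌊t / h⌋₊ = k := by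
      rw [Nat.floor_eq_iff (div_nonneg ((by positivity : (0 : ℝ) ≤ k * h).trans ht.1) hh.le),
        le_div_iff₀ hh, div_lt_iff₀ hh]
      exact ⟨ht.1, hlt⟩
    rw [eulerInterp, hk, hsucc, smul_smul, div_mul_cancel₀ _ hh.ne']
  · have hk : ⌊(k + 1) * h / h⌋₊ = k + 1 := by
      rw [mul_div_cancel_right₀ _ hh.ne']; exact_mod_cast Nat.floor_natCast (k + 1)
    rw [eulerInterp, hk]
    push_cast
    rw [sub_self, zero_div, zero_smul, add_zero, add_mul, one_mul, add_sub_cancel_left]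
    rfl

lemma eulerInterp_natCast_mul (hh : 0 < h) (k : ℕ) :
    eulerInterp e x0 h (k * h) = euler e x0 h k := by
  rw [eulerInterp_eq_of_mem_Icc hh ⟨le_rfl, by nlinarith⟩, sub_self, zero_smul, add_zero]

lemma eulerInterp_zero (hh : 0 < h) : eulerInterp e x0 h 0 = x0 := by
  have h0 := eulerInterp_natCast_mul (e := e) (x0 := x0) hh 0
  rwa [Nat.cast_zero, zero_mul] at h0

lemma dist_eulerInterp_euler_le (hh : 0 < h) {k : ℕ} (ht : t ∈ Icc (k * h) ((k + 1) * h)) :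
    dist (eulerInterp e x0 h t) (euler e x0 h k) ≤ h * ‖e (euler e x0 h k)‖ := by
  rw [eulerInterp_eq_of_mem_Icc hh ht, dist_eq_norm, add_sub_cancel_left, norm_smul,
    Real.norm_of_nonneg (sub_nonneg.2 ht.1)]
  gcongr
  linarith [ht.2]

lemma continuousOn_eulerInterp (hh : 0 < h) (m : ℕ) :
    ContinuousOn (eulerInterp e x0 h) (Icc 0 (m * h)) := by
  induction m with
  | zero => simp
  | succ m ih =>
    have hseg : ContinuousOn (eulerInterp e x0 h) (Icc (m * h) ((m + 1) * h)) :=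
      (by fun_prop : Continuous fun s : ℝ => euler e x0 h m + (s - m * h) • e (euler e x0 h m))
        |>.continuousOn.congr fun s hs => eulerInterp_eq_of_mem_Icc hh hs
    rw [Nat.cast_succ, ← Icc_union_Icc_eq_Icc (b := m * h) (by positivity) (by nlinarith)]
    exact ih.union_of_isClosed hseg isClosed_Icc isClosed_Icc

lemma hasDerivWithinAt_eulerInterp (hh : 0 < h) (ht : 0 ≤ t) :
    HasDerivWithinAt (eulerInterp e x0 h) (e (euler e x0 h ⌊t / h⌋₊)) (Ici t) t := by
  obtain ⟨hlo, hhi⟩ := mem_Ico_natFloor_div_mul hh ht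
  have hseg : HasDerivAt (fun s => euler e x0 h ⌊t / h⌋₊ + (s - ⌊t / h⌋₊ * h) •
      e (euler e x0 h ⌊t / h⌋₊)) (e (euler e x0 h ⌊t / h⌋₊)) t := by
    simpa using (((hasDerivAt_id t).sub_const _).smul_const (e (euler e x0 h ⌊t / h⌋₊))).const_add
      (euler e x0 h ⌊t / h⌋₊)
  refine hseg.hasDerivWithinAt.congr_of_eventuallyEq ?_
    (eulerInterp_eq_of_mem_Icc hh ⟨hlo, hhi.le⟩)
  filter_upwards [Ico_mem_nhdsGE hhi] with s hs
  exact eulerInterp_eq_of_mem_Icc hh ⟨hlo.trans hs.1, hs.2.le⟩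

end EulerInterp

lemma gronwallBound_zero_mul (K ε c x : ℝ) :
    gronwallBound 0 K (ε * c) x = c * gronwallBound 0 K ε x := by
  unfold gronwallBound
  split_ifs <;> ring

section EulerConvergence

variable {n : ℕ} {e : EuclideanSpace ℝ (Fin n) → EuclideanSpace ℝ (Fin n)}
  {x0 : EuclideanSpace ℝ (Fin n)} {p : ℝ → EuclideanSpace ℝ (Fin n)} {h : ℝ}
  {K : Set (EuclideanSpace ℝ (Fin n))} {L : ℝ≥0} {M : ℝ}

/-- Where `e` is `L`-Lipschitz and bounded by `M`, the Euler interpolant solves the ODE up to a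
defect `L * M * h`. -/
theorem dist_eulerInterp_le_of_forall_mem (hsol : ∀ t, HasDerivAt p (e (p t)) t)
    (hp0 : p 0 = x0) (hL : LipschitzOnWith L e K) (hM : ∀ y ∈ K, ‖e y‖ ≤ M) (hh : 0 < h) {b : ℝ}
    (hpK : ∀ t ∈ Icc 0 b, p t ∈ K) (hgK : ∀ t ∈ Icc 0 b, eulerInterp e x0 h t ∈ K) :
    ∀ t ∈ Icc 0 b, dist (p t) (eulerInterp e x0 h t) ≤ h * gronwallBound 0 L (L * M) t := by
  have hcont : ContinuousOn (eulerInterp e x0 h) (Icc 0 b) :=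
    (continuousOn_eulerInterp hh ⌈b / h⌉₊).mono
      (Icc_subset_Icc_right ((div_le_iff₀ hh).1 (Nat.le_ceil _)))
  have hdefect : ∀ t ∈ Ico 0 b,
      dist (e (euler e x0 h ⌊t / h⌋₊)) (e (eulerInterp e x0 h t)) ≤ L * M * h := by
    intro t ht
    have hseg := mem_Ico_natFloor_div_mul hh ht.1
    have hxK : euler e x0 h ⌊t / h⌋₊ ∈ K := by
      rw [← eulerInterp_natCast_mul hh]
      exact hgK _ ⟨by positivity, hseg.1.trans ht.2.le⟩
    calc dist (e (euler e x0 h ⌊t / h⌋₊)) (e (eulerInterp e x0 h t))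
        ≤ L * dist (euler e x0 h ⌊t / h⌋₊) (eulerInterp e x0 h t) :=
          hL.dist_le_mul _ hxK _ (hgK t (Ico_subset_Icc_self ht))
      _ ≤ L * (h * M) := by
          rw [dist_comm]
          gcongr
          exact (dist_eulerInterp_euler_le hh (Ico_subset_Icc_self hseg)).trans
            (by gcongr; exact hM _ hxK)
      _ = L * M * h := by ring
  intro t ht
  have hgron := dist_le_of_approx_trajectories_ODE_of_mem (v := fun _ => e) (s := fun _ => K)
    (fun _ _ => hL) (continuous_iff_continuousAt.2 fun t => (hsol t).continuousAt).continuousOn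
    (fun t _ => (hsol t).hasDerivWithinAt) (fun t _ => (dist_self _).le)
    (fun t ht => hpK t (Ico_subset_Icc_self ht)) hcont
    (fun t ht => hasDerivWithinAt_eulerInterp hh ht.1) hdefect
    (fun t ht => hgK t (Ico_subset_Icc_self ht))
    (by rw [hp0, eulerInterp_zero hh, dist_self]) t ht
  rwa [zero_add, sub_zero, gronwallBound_zero_mul] at hgron

/-- Induction over the Euler steps: the iterate at `k * h` is close to `p (k * h)` by Grönwall on
`[0, k * h]`, and over the next step both curves move by at most `M * h`. -/
theorem eulerInterp_mem_of_closedBall_subset (hsol : ∀ t, HasDerivAt p (e (p t)) t)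
    (hp0 : p 0 = x0) (hL : LipschitzOnWith L e K) (hM : ∀ y ∈ K, ‖e y‖ ≤ M) (hM0 : 0 ≤ M)
    (hh : 0 < h) {T : ℝ} (hK : ∀ t ∈ Icc 0 T, closedBall (p t) 1 ⊆ K)
    (hsmall : h * gronwallBound 0 L (L * M) T + 2 * (M * h) ≤ 1) :
    ∀ t ∈ Icc 0 T, eulerInterp e x0 h t ∈ K := by
  have hpK : ∀ t ∈ Icc 0 T, p t ∈ K := fun t ht => hK t ht (mem_closedBall_self zero_le_one)
  have hpLip : ∀ s ∈ Icc 0 T, ∀ t ∈ Icc 0 T, dist (p t) (p s) ≤ M * ‖t - s‖ := by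
    intro s hs t ht
    rw [dist_eq_norm]
    exact (convex_Icc 0 T).norm_image_sub_le_of_norm_hasDerivWithin_le
      (fun u _ => (hsol u).hasDerivWithinAt) (fun u hu => hM _ (hpK u hu)) hs ht
  suffices hstep : ∀ k : ℕ, ∀ t ∈ Icc 0 (min (k * h) T), eulerInterp e x0 h t ∈ K by
    intro t ht
    refine hstep ⌈T / h⌉₊ t ⟨ht.1, le_min ?_ ht.2⟩
    exact ht.2.trans ((div_le_iff₀ hh).1 (Nat.le_ceil _))
  intro k
  induction k with
  | zero =>
    rintro t ⟨ht0, ht⟩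
    have hT : 0 ≤ T := ht0.trans (ht.trans (min_le_right _ _))
    obtain rfl : t = 0 := le_antisymm (by simpa using ht.trans (min_le_left _ _)) ht0
    rw [eulerInterp_zero hh, ← hp0]
    exact hpK 0 ⟨le_rfl, hT⟩
  | succ k ih =>
    rintro t ⟨ht0, ht⟩
    have htT : t ≤ T := ht.trans (min_le_right _ _)
    by_cases htk : t ≤ k * h
    · exact ih t ⟨ht0, le_min htk htT⟩
    push Not at htk
    have hkT : (k : ℝ) * h ∈ Icc 0 T := ⟨by positivity, htk.le.trans htT⟩
    have hstart : dist (p (k * h)) (euler e x0 h k) ≤ h * gronwallBound 0 L (L * M) T := by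
      rw [← eulerInterp_natCast_mul hh]
      refine (dist_eulerInterp_le_of_forall_mem hsol hp0 hL hM hh
        (fun s hs => hpK s ⟨hs.1, hs.2.trans hkT.2⟩) (fun s hs => ih s ⟨hs.1, le_min hs.2
          (hs.2.trans hkT.2)⟩) _ ⟨hkT.1, le_rfl⟩).trans ?_
      gcongr
      exact gronwallBound_mono le_rfl (by positivity) L.2 hkT.2
    have hxK : euler e x0 h k ∈ K := by
      rw [← eulerInterp_natCast_mul hh]
      exact ih _ ⟨hkT.1, le_min le_rfl hkT.2⟩
    have hseg : t ∈ Icc (k * h) ((k + 1) * h) := ⟨htk.le, by simpa using ht.trans (min_le_left _ _)⟩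
    apply hK t ⟨ht0, htT⟩
    rw [mem_closedBall]
    calc dist (eulerInterp e x0 h t) (p t)
        ≤ dist (eulerInterp e x0 h t) (euler e x0 h k) + dist (euler e x0 h k) (p (k * h)) +
          dist (p (k * h)) (p t) := dist_triangle4 _ _ _ _
      _ ≤ h * M + h * gronwallBound 0 L (L * M) T + M * h := by
          gcongr
          · exact (dist_eulerInterp_euler_le hh hseg).trans (by gcongr; exact hM _ hxK)
          · rwa [dist_comm]
          · refine (hpLip t ⟨ht0, htT⟩ _ hkT).trans ?_
            gcongr
            rw [norm_sub_rev, Real.norm_of_nonneg (by linarith)]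
            linarith [hseg.2]
      _ ≤ 1 := by linarith

theorem exists_dist_eulerInterp_le (hLip : LocallyLipschitz e) (hp0 : p 0 = x0)
    (hsol : ∀ t, HasDerivAt p (e (p t)) t) (T : ℝ) :
    ∃ C, ∀ᶠ h in 𝓝[>] 0, ∀ t ∈ Icc 0 T, dist (p t) (eulerInterp e x0 h t) ≤ C * h := by
  have hpc : Continuous p := continuous_iff_continuousAt.2 fun t => (hsol t).continuousAt
  set K := cthickening 1 (p '' Icc 0 T)
  have hKc : IsCompact K := (isCompact_Icc.image hpc).cthickening
  have hK : ∀ t ∈ Icc 0 T, closedBall (p t) 1 ⊆ K :=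
    fun t ht => closedBall_subset_cthickening (mem_image_of_mem p ht) 1
  obtain ⟨L, hL⟩ := hLip.locallyLipschitzOn.exists_lipschitzOnWith_of_compact hKc
  obtain ⟨M, hM⟩ := hKc.exists_bound_of_continuousOn hLip.continuous.continuousOn
  have hM' : ∀ y ∈ K, ‖e y‖ ≤ max M 0 := fun y hy => (hM y hy).trans (le_max_left _ _)
  set C := gronwallBound 0 L (L * max M 0) T
  have hsmall : ∀ᶠ h in 𝓝[>] 0, h * C + 2 * (max M 0 * h) < 1 := by
    refine (Tendsto.mono_left ?_ nhdsWithin_le_nhds).eventually (gt_mem_nhds one_pos)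
    exact (by fun_prop : Continuous fun h : ℝ => h * C + 2 * (max M 0 * h)).tendsto' 0 0 (by simp)
  refine ⟨C, ?_⟩
  filter_upwards [self_mem_nhdsWithin, hsmall] with h hh hhC t ht
  have hgK := eulerInterp_mem_of_closedBall_subset hsol hp0 hL hM' (le_max_right _ _) hh hK
    hhC.le
  calc dist (p t) (eulerInterp e x0 h t)
      ≤ h * gronwallBound 0 L (L * max M 0) t :=
        dist_eulerInterp_le_of_forall_mem hsol hp0 hL hM' hh
          (fun s hs => hK s hs (mem_closedBall_self zero_le_one)) hgK t ht
    _ ≤ C * h := by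
        rw [mul_comm C]
        exact mul_le_mul_of_nonneg_left
          (gronwallBound_mono le_rfl (mul_nonneg L.2 (le_max_right _ _)) L.2 ht.2) hh.le

theorem tendstoUniformlyOn_eulerInterp (hLip : LocallyLipschitz e) (hp0 : p 0 = x0)
    (hsol : ∀ t, HasDerivAt p (e (p t)) t) (T : ℝ) :
    TendstoUniformlyOn (eulerInterp e x0) p (𝓝[>] 0) (Icc 0 T) := by
  obtain ⟨C, hC⟩ := exists_dist_eulerInterp_le hLip hp0 hsol T
  rw [Metric.tendstoUniformlyOn_iff]
  intro ε hε
  have hCh : ∀ᶠ h in 𝓝[>] 0, C * h < ε :=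
    ((by fun_prop : Continuous fun h : ℝ => C * h).tendsto' 0 0 (by simp)).mono_left
      nhdsWithin_le_nhds |>.eventually (gt_mem_nhds hε)
  filter_upwards [hC, hCh] with h hdist hCh t ht using (hdist t ht).trans_lt hCh

end EulerConvergence

theorem List.Forall₂.imp_append_singleton {α β : Type*} {R S : α → β → Prop} {a a' : α}
    (hRS : ∀ x y, R x y → S x y) (ha : ∀ y, R a y → S a' y) :
    ∀ {l : List α} {l' : List β}, Forall₂ R (l ++ [a]) l' → Forall₂ S (l ++ [a']) l'
  | [], _, .cons hab .nil => .cons (ha _ hab) .nil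
  | _ :: _, _, .cons hxy hrest => .cons (hRS _ _ hxy) (imp_append_singleton hRS ha hrest)

section Closeness

variable {n : ℕ} {ε δ : ℝ} {a b c : EuclideanSpace ℝ (Fin n)}

lemma stClose_of_dist_lt (hab : dist a b < ε) : stClose ε a b :=
  fun i => (Real.dist_eq (a i) (b i) ▸ PiLp.dist_apply_le a b i).trans_lt hab

lemma stClose.mono (hab : stClose ε a b) (hεδ : ε ≤ δ) : stClose δ a b :=
  fun i => (hab i).trans_le hεδ

lemma stClose.trans (hab : stClose ε a b) (hbc : stClose δ b c) : stClose (ε + δ) a c :=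
  fun i => (abs_sub_le _ (b i) _).trans_lt (add_lt_add (hab i) (hbc i))

lemma evClose.mono {x y : Ev (EuclideanSpace ℝ (Fin n))} (hxy : evClose ε x y) (hεδ : ε ≤ δ) :
    evClose δ x y := by
  match x, y, hxy with
  | .wait .., .wait .., ⟨hd, hp, hr⟩ =>
    exact ⟨hd.trans_le hεδ, fun t ht0 ht => (hp t ht0 ht).trans_le hεδ, hr⟩
  | .comm .., .comm .., ⟨hch, hdir, hv⟩ => exact ⟨hch, hdir, hv.trans_le hεδ⟩

lemma trClose.mono {l l' : List (Ev (EuclideanSpace ℝ (Fin n)))} (hl : trClose ε l l')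
    (hεδ : ε ≤ δ) : trClose δ l l' :=
  hl.imp fun _ _ hxy => hxy.mono hεδ

lemma evClose_refl (hε : 0 < ε) (x : Ev (EuclideanSpace ℝ (Fin n))) : evClose ε x x := by
  cases x <;> simp [evClose, hε]

lemma trClose_refl (hε : 0 < ε) (l : List (Ev (EuclideanSpace ℝ (Fin n)))) : trClose ε l l :=
  List.forall₂_same.2 fun x _ => evClose_refl hε x

/-- A substitute for transitivity, which `evClose` lacks: paths are compared only up to the
shorter duration. -/
lemma evClose_wait_of_dist_lt {d : ℝ} {f g : ℝ → EuclideanSpace ℝ (Fin n)} {r : Set RdyEv}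
    {y : Ev (EuclideanSpace ℝ (Fin n))} (hy : evClose ε (.wait d f r) y) (hδ : 0 ≤ δ)
    (hfg : ∀ t, 0 < t → t < d → dist (g t) (f t) < δ) : evClose (δ + ε) (.wait d g r) y := by
  match y, hy with
  | .wait d' f' r', ⟨hd, hp, hr⟩ =>
    refine ⟨by linarith, fun t ht0 ht => ?_, hr⟩
    calc ‖g t - f' t‖ ≤ dist (g t) (f t) + ‖f t - f' t‖ := by
          rw [dist_eq_norm]; exact norm_sub_le_norm_sub_add_norm_sub _ _ _
      _ < δ + ε := add_lt_add (hfg t ht0 (ht.trans_le (min_le_left _ _))) (hp t ht0 ht)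

lemma trClose_append_wait_of_dist_lt {d : ℝ} {f g : ℝ → EuclideanSpace ℝ (Fin n)}
    {r : Set RdyEv} {l l' : List (Ev (EuclideanSpace ℝ (Fin n)))}
    (hl : trClose ε (l ++ [.wait d f r]) l') (hδ : 0 ≤ δ)
    (hfg : ∀ t, 0 < t → t < d → dist (g t) (f t) < δ) : trClose (δ + ε) (l ++ [.wait d g r]) l' :=
  List.Forall₂.imp_append_singleton (fun _ _ hxy => hxy.mono (by linarith))
    (fun _ hy => evClose_wait_of_dist_lt hy hδ hfg) hl

end Closeness

lemma eventually_nhdsGT_zero_iff {P : ℝ → Prop} :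
    (∀ᶠ x in 𝓝[>] 0, P x) ↔ ∃ x₀ > (0:ℝ), ∀ x, 0 < x → x < x₀ → P x := by
  simp [(nhdsGT_basis (0:ℝ)).eventually_iff, and_imp]

section Preconditions

variable {n : ℕ} {B : EuclideanSpace ℝ (Fin n) → Prop}
  {Q : EuclideanSpace ℝ (Fin n) → List (Ev (EuclideanSpace ℝ (Fin n))) → Prop}
  {tr : List (Ev (EuclideanSpace ℝ (Fin n)))}

lemma inUminusB.of_dist_lt {ε : ℝ} {s s' : EuclideanSpace ℝ (Fin n)} (hs : inUminusB ε B s)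
    (hss' : dist s s' < ε) : B s' :=
  hs s' (stClose_of_dist_lt hss')

theorem eventually_inUminusB_iff (hBopen : ∀ s, B s → ∃ ε > (0:ℝ), ∀ s', stClose ε s s' → B s')
    {x : ℝ → EuclideanSpace ℝ (Fin n)} {s : EuclideanSpace ℝ (Fin n)}
    (hx : Tendsto x (𝓝[>] 0) (𝓝 s)) :
    (∀ᶠ ε in 𝓝[>] 0, ∀ᶠ h in 𝓝[>] 0, inUminusB ε B (x h)) ↔ B s := by
  constructor
  · intro hev
    obtain ⟨ε, hεB, hε⟩ := (hev.and self_mem_nhdsWithin).exists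
    obtain ⟨h, hB, hxh⟩ := (hεB.and (hx.eventually (ball_mem_nhds s hε))).exists
    exact hB.of_dist_lt hxh
  · intro hs
    obtain ⟨δ, hδ, hδB⟩ := hBopen s hs
    filter_upwards [Ioo_mem_nhdsGT (half_pos hδ)] with ε hε
    filter_upwards [hx.eventually (ball_mem_nhds s (half_pos hδ))] with h hxh s' hs'
    exact hδB s' (((stClose_of_dist_lt (mem_ball'.1 hxh)).trans hs').mono (by linarith [hε.2]))

def ContinuousPrecondition (p : ℝ → EuclideanSpace ℝ (Fin n))
    (B : EuclideanSpace ℝ (Fin n) → Prop)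
    (Q : EuclideanSpace ℝ (Fin n) → List (Ev (EuclideanSpace ℝ (Fin n))) → Prop)
    (tr : List (Ev (EuclideanSpace ℝ (Fin n)))) : Prop :=
  ∀ d > (0:ℝ), (∀ t, 0 ≤ t → t < d → B (p t)) → ¬ B (p d) → Q (p d) (tr ++ [Ev.wait d p ∅])

/-- The discrete precondition (DP) for a family `F h` of approximations of the solution, with
`∃ ε₀ > 0, ∀ ε ∈ (0, ε₀), …` written as `∀ᶠ ε in 𝓝[>] 0, …`. -/
def DiscretePrecondition (F : ℝ → ℝ → EuclideanSpace ℝ (Fin n))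
    (B : EuclideanSpace ℝ (Fin n) → Prop)
    (Q : EuclideanSpace ℝ (Fin n) → List (Ev (EuclideanSpace ℝ (Fin n))) → Prop)
    (tr : List (Ev (EuclideanSpace ℝ (Fin n)))) : Prop :=
  ∀ T > (0:ℝ),
    (∀ t, 0 ≤ t → t < T → ∀ᶠ ε in 𝓝[>] 0, ∀ᶠ h in 𝓝[>] 0, inUminusB ε B (F h t)) →
    ∀ᶠ ε in 𝓝[>] 0, ∀ᶠ h in 𝓝[>] 0,
      ¬ inUminusB ε B (F h T) → inUminusQ ε Q (F h T) (tr ++ [Ev.wait T (F h) ∅])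

variable {p : ℝ → EuclideanSpace ℝ (Fin n)} {F : ℝ → ℝ → EuclideanSpace ℝ (Fin n)}

theorem discretePrecondition_of_continuousPrecondition
    (hBopen : ∀ s, B s → ∃ ε > (0:ℝ), ∀ s', stClose ε s s' → B s')
    (hQopen : ∀ s tr', Q s tr' →
      ∃ ε > (0:ℝ), ∀ s' tr'', stClose ε s s' → trClose ε tr' tr'' → Q s' tr'')
    (hF : ∀ T > (0:ℝ), TendstoUniformlyOn F p (𝓝[>] 0) (Icc 0 T))
    (hcp : ContinuousPrecondition p B Q tr) : DiscretePrecondition F B Q tr := by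
  intro T hT hdp
  have hFt : ∀ t ∈ Icc 0 T, Tendsto (F · t) (𝓝[>] 0) (𝓝 (p t)) :=
    fun t ht => (hF T hT).tendsto_at ht
  have hTmem : T ∈ Icc 0 T := ⟨hT.le, le_rfl⟩
  by_cases hBT : B (p T)
  · filter_upwards [(eventually_inUminusB_iff hBopen (hFt T hTmem)).2 hBT] with ε hε
    filter_upwards [hε] with h hB hnB using absurd hB hnB
  have hB t (ht0 : 0 ≤ t) (htT : t < T) : B (p t) :=
    (eventually_inUminusB_iff hBopen (hFt t ⟨ht0, htT.le⟩)).1 (hdp t ht0 htT)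
  obtain ⟨δ, hδ, hδQ⟩ := hQopen _ _ (hcp T hT hB hBT)
  filter_upwards [Ioo_mem_nhdsGT (half_pos hδ)] with ε hε
  filter_upwards [Metric.tendstoUniformlyOn_iff.1 (hF T hT) _ (half_pos hδ)]
    with h hh _ s' tr' hs' htr'
  refine hδQ s' tr' (((stClose_of_dist_lt (hh T hTmem)).trans hs').mono (by linarith [hε.2]))
    (trClose.mono (trClose_append_wait_of_dist_lt htr' (half_pos hδ).le
      fun t ht0 htT => hh t ⟨ht0.le, htT.le⟩) (by linarith [hε.2]))

theorem continuousPrecondition_of_discretePrecondition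
    (hBopen : ∀ s, B s → ∃ ε > (0:ℝ), ∀ s', stClose ε s s' → B s')
    (hF : ∀ T > (0:ℝ), TendstoUniformlyOn F p (𝓝[>] 0) (Icc 0 T))
    (hdp : DiscretePrecondition F B Q tr) : ContinuousPrecondition p B Q tr := by
  intro d hd hB hnB
  have hdp' := hdp d hd fun t ht0 htd =>
    (eventually_inUminusB_iff hBopen ((hF d hd).tendsto_at ⟨ht0, htd.le⟩)).2 (hB t ht0 htd)
  obtain ⟨ε, hεQ, hε⟩ := (hdp'.and self_mem_nhdsWithin).exists
  obtain ⟨h, hQ, hh⟩ :=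
    (hεQ.and (Metric.tendstoUniformlyOn_iff.1 (hF d hd) _ (half_pos hε))).exists
  have hFd : dist (F h d) (p d) < ε := by
    rw [dist_comm]; linarith [hh d ⟨hd.le, le_rfl⟩]
  refine hQ (fun hBd => hnB (hBd.of_dist_lt hFd)) (p d) _ (stClose_of_dist_lt hFd) ?_
  simpa using trClose_append_wait_of_dist_lt (trClose_refl (half_pos hε) _) (half_pos hε).le
    fun t ht0 htd => (dist_comm (F h t) (p t)).trans_lt (hh t ⟨ht0.le, htd.le⟩)

end Preconditions

/-- Equivalence of the continuous precondition (CP) and its discrete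
version (DP) for open `B` and open `Q`. -/
theorem CP_iff_DP {n : ℕ}
    (e : EuclideanSpace ℝ (Fin n) → EuclideanSpace ℝ (Fin n))
    (x0 : EuclideanSpace ℝ (Fin n))
    (p : ℝ → EuclideanSpace ℝ (Fin n))
    (B : EuclideanSpace ℝ (Fin n) → Prop)
    (Q : EuclideanSpace ℝ (Fin n) → List (Ev (EuclideanSpace ℝ (Fin n))) → Prop)
    (tr : List (Ev (EuclideanSpace ℝ (Fin n))))
    (hLip : LocallyLipschitz e)
    (hp0 : p 0 = x0)
    (hsol : ∀ t, HasDerivAt p (e (p t)) t)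
    (hBopen : ∀ s, B s → ∃ ε > (0:ℝ), ∀ s', stClose ε s s' → B s')
    (hQopen : ∀ s tr', Q s tr' →
      ∃ ε > (0:ℝ), ∀ s' tr'', stClose ε s s' → trClose ε tr' tr'' → Q s' tr'') :
    -- (CP)
    (∀ d > (0:ℝ), (∀ t, 0 ≤ t → t < d → B (p t)) → ¬ B (p d) →
        Q (p d) (tr ++ [Ev.wait d p ∅]))
    ↔
    -- (DP)
    (∀ T > (0:ℝ),
      (∀ t, 0 ≤ t → t < T →
        ∃ ε₀ > (0:ℝ), ∀ ε, 0 < ε → ε < ε₀ →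
          ∃ h₀ > (0:ℝ), ∀ h, 0 < h → h < h₀ →
            inUminusB ε B (eulerInterp e x0 h t)) →
      ∃ ε₀ > (0:ℝ), ∀ ε, 0 < ε → ε < ε₀ →
        ∃ h₀ > (0:ℝ), ∀ h, 0 < h → h < h₀ →
          (¬ inUminusB ε B (eulerInterp e x0 h T) →
            inUminusQ ε Q (eulerInterp e x0 h T)
              (tr ++ [Ev.wait T (eulerInterp e x0 h) ∅]))) := by
  have hF : ∀ T > (0:ℝ), TendstoUniformlyOn (eulerInterp e x0) p (𝓝[>] 0) (Icc 0 T) :=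
    fun T _ => tendstoUniformlyOn_eulerInterp hLip hp0 hsol T
  have key : ContinuousPrecondition p B Q tr ↔ DiscretePrecondition (eulerInterp e x0) B Q tr :=
    ⟨discretePrecondition_of_continuousPrecondition hBopen hQopen hF,
      continuousPrecondition_of_discretePrecondition hBopen hF⟩
  simpa only [ContinuousPrecondition, DiscretePrecondition, eventually_nhdsGT_zero_iff] using key
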